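/- Let f(n) be the number of functions c : Fin n → {Empty, Blue, Red} such that no two adjacent indices are both non-Empty. Then 3·f(n) = 2^(n+2) - (-1)^n for all n ≥ 0, where this is interpreted as an identity of integers. -/

import Mathlib

inductive Color : Type
  | Empty | Blue | Red
  deriving DecidableEq

instance instFintypeColor : Fintype Color :=
  Fintype.ofList [Color.Empty, Color.Blue, Color.Red] (by intro x; cases x <;> simp)

/-- Number of `{Empty, Blue, Red}`-colorings of `Fin n` in which no two adjacent
indices are both non-`Empty` (positions of Cis on the path `P_n`). -/
def cisPath (n : ℕ) : ℕ :=
  Fintype.card {c : Fin n → Color //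
    ∀ i j : Fin n, (j : ℕ) = (i : ℕ) + 1 →
      ¬(c i ≠ Color.Empty ∧ c j ≠ Color.Empty)}

/-!
Splitting off the last color: a sparse coloring of length `n + 2` ending in the blank color `e`
is any sparse coloring of length `n + 1` followed by `e`, and one ending in one of the other
`|α| - 1` colors must have `e` just before it. Hence `f (n + 2) = f (n + 1) + (|α| - 1) f n`;
with three colors the characteristic roots are `2` and `-1`, and `f 0 = 1`, `f 1 = 3`.
-/

theorem Fintype.card_subtype_fin_succ_eq_sum_snoc {α : Type*} [Fintype α] {n : ℕ}
    (P : (Fin (n + 1) → α) → Prop) [DecidablePred P] :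
    Fintype.card {c // P c} = ∑ x, Fintype.card {c : Fin n → α // P (Fin.snoc c x)} := by
  rw [← Fintype.card_sigma]
  exact Fintype.card_congr <|
    ((Fin.snocEquiv fun _ ↦ α).subtypeEquivOfSubtype).symm.trans
      (Equiv.subtypeProdEquivSigmaSubtype fun x c ↦ P (Fin.snoc c x))

section SparseColoring

variable {α : Type*} (e : α)

/-- The positions not colored `e` form an independent set of the path on `Fin n`. -/
def IsSparseColoring {n : ℕ} (c : Fin n → α) : Prop :=
  ∀ i j : Fin n, (j : ℕ) = (i : ℕ) + 1 → ¬(c i ≠ e ∧ c j ≠ e)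

variable {e}

theorem isSparseColoring_of_le_one {n : ℕ} (hn : n ≤ 1) (c : Fin n → α) :
    IsSparseColoring e c := by
  intro i j hij
  omega

theorem isSparseColoring_snoc_iff {n : ℕ} {c : Fin n → α} {x : α} :
    IsSparseColoring e (Fin.snoc c x : Fin (n + 1) → α) ↔
      IsSparseColoring e c ∧ ∀ i : Fin n, (i : ℕ) + 1 = n → ¬(c i ≠ e ∧ x ≠ e) := by
  constructor
  · intro h
    refine ⟨fun i j hij ↦ ?_, fun i hi ↦ ?_⟩
    · simpa using h i.castSucc j.castSucc (by simpa using hij)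
    · simpa using h i.castSucc (Fin.last n) (by simp [hi])
  · rintro ⟨hc, hx⟩ i j hij
    induction i using Fin.lastCases with
    | last => simp only [Fin.val_last] at hij; omega
    | cast i =>
      induction j using Fin.lastCases with
      | last => simpa using hx i (by simpa using hij.symm)
      | cast j => simpa using hc i j (by simpa using hij)

theorem isSparseColoring_snoc_self_iff {n : ℕ} {c : Fin n → α} :
    IsSparseColoring e (Fin.snoc c e : Fin (n + 1) → α) ↔ IsSparseColoring e c := by
  simp [isSparseColoring_snoc_iff]

theorem isSparseColoring_snoc_snoc_iff {n : ℕ} {c : Fin (n + 1) → α} {x : α} :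
    IsSparseColoring e (Fin.snoc c x : Fin (n + 2) → α) ↔
      IsSparseColoring e c ∧ (c (Fin.last n) = e ∨ x = e) := by
  rw [isSparseColoring_snoc_iff]
  refine and_congr_right fun _ ↦ ⟨fun h ↦ ?_, fun h i hi ↦ ?_⟩
  · have := h (Fin.last n) rfl
    tauto
  · obtain rfl : i = Fin.last n := Fin.ext (by simp only [Fin.val_last]; omega)
    tauto

variable [DecidableEq α]

instance {n : ℕ} : DecidablePred (IsSparseColoring e : (Fin n → α) → Prop) :=
  fun _ ↦ inferInstanceAs (Decidable (∀ _, _))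

variable [Fintype α]

variable (e) in
def sparseColoringCount (n : ℕ) : ℕ :=
  Fintype.card {c : Fin n → α // IsSparseColoring e c}

theorem sparseColoringCount_zero : sparseColoringCount e 0 = 1 := by
  rw [sparseColoringCount, Fintype.card_congr (Equiv.subtypeUnivEquiv
    (isSparseColoring_of_le_one zero_le_one)), Fintype.card_unique]

theorem sparseColoringCount_one : sparseColoringCount e 1 = Fintype.card α := by
  rw [sparseColoringCount, Fintype.card_congr (Equiv.subtypeUnivEquiv
    (isSparseColoring_of_le_one le_rfl)), Fintype.card_fun, Fintype.card_fin, pow_one]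

theorem card_isSparseColoring_last_eq (n : ℕ) :
    Fintype.card {c : Fin (n + 1) → α // IsSparseColoring e c ∧ c (Fin.last n) = e} =
      sparseColoringCount e n := by
  rw [Fintype.card_subtype_fin_succ_eq_sum_snoc, Fintype.sum_eq_single e]
  · simp only [Fin.snoc_last, and_true, isSparseColoring_snoc_self_iff]
    rfl
  · intro x hx
    simp [hx]

theorem sparseColoringCount_add_two (n : ℕ) :
    sparseColoringCount e (n + 2) =
      sparseColoringCount e (n + 1) + (Fintype.card α - 1) * sparseColoringCount e n := by
  have h_nonempty_last : ∀ x ≠ e,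
      Fintype.card {c : Fin (n + 1) → α // IsSparseColoring e (Fin.snoc c x : Fin (n + 2) → α)} =
        sparseColoringCount e n := by
    intro x hx
    simp only [isSparseColoring_snoc_snoc_iff, hx, or_false]
    exact card_isSparseColoring_last_eq n
  rw [sparseColoringCount, Fintype.card_subtype_fin_succ_eq_sum_snoc,
    Fintype.sum_eq_add_sum_compl e, Finset.sum_congr rfl fun x hx ↦
      h_nonempty_last x (by simpa using hx), Finset.sum_const, Finset.card_compl,
    Finset.card_singleton, smul_eq_mul]
  simp only [isSparseColoring_snoc_self_iff]
  rfl

end SparseColoring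

theorem cisPath_eq_sparseColoringCount (n : ℕ) : cisPath n = sparseColoringCount Color.Empty n :=
  rfl

theorem cisPath_closed_form (n : ℕ) :
    (3 : ℤ) * cisPath n = 2 ^ (n + 2) - (-1) ^ n := by
  have h_card : Fintype.card Color = 3 := rfl
  rw [cisPath_eq_sparseColoringCount]
  induction n using Nat.twoStepInduction with
  | zero => norm_num [sparseColoringCount_zero]
  | one => norm_num [sparseColoringCount_one, h_card]
  | more n ih₀ ih₁ =>
    rw [sparseColoringCount_add_two, h_card]
    push_cast
    linear_combination ih₁ + 2 * ih₀
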